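/- The Fourier projection P_k commutes appropriately with Bessel operators: if ψ̂ : ℝ² → ℂ is C¹ and P_k[ψ̂](r) := (1/2π) ∫₀^{2π} ψ̂(r cos θ, r sin θ) e^{−ikθ} dθ, then D_k(P_k[ψ̂])(r) = P_{k−1}[√2 ∂_ζ ψ̂](r) and D_{−k}(P_k[ψ̂])(r) = P_{k+1}[√2 ∂_{ζ̄} ψ̂](r) for r > 0. -/

import Mathlib

/-- The Bessel operator `D_κ f (r) = f'(r) + (κ/r) f(r)`. -/
noncomputable def besselD (κ : ℝ) (f : ℝ → ℂ) : ℝ → ℂ :=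
  fun r => deriv f r + ((κ / r : ℝ) : ℂ) * f r

/-- The Fourier projection `P_k[ψ](r) = (1/2π) ∫₀^{2π} ψ(r cos θ, r sin θ) e^{−ikθ} dθ`. -/
noncomputable def fourierProj (k : ℤ) (ψ : ℝ × ℝ → ℂ) (r : ℝ) : ℂ :=
  ((1 / (2 * Real.pi) : ℝ) : ℂ) *
    ∫ θ in (0 : ℝ)..(2 * Real.pi),
      ψ (r * Real.cos θ, r * Real.sin θ) * Complex.exp (-(Complex.I * k * θ))
open Real Metric

/-!
Write `L = dψ` at the point `r e^{iθ}`. The radial and angular derivatives of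
`θ ↦ ψ(r cos θ, r sin θ)` are `L (cos θ, sin θ)` and `L (-r sin θ, r cos θ)`, and for `s = ±1`
one has `∂_x ψ + s i ∂_y ψ = e^{isθ} (∂_r + (s i / r) ∂_θ) ψ`. Differentiating `P_k` under the
integral sign produces the `∂_r` term, while integrating the `∂_θ` term by parts over a full
period turns it into `i k P_k`; together they give `D_{-sk} P_k = P_{k+s}[∂_x ψ + s i ∂_y ψ]`.
-/

theorem hasDerivAt_intervalIntegral_of_continuous_uncurry {E : Type*} [NormedAddCommGroup E]
    [NormedSpace ℝ E] {F F' : ℝ → ℝ → E} (hF : Continuous (Function.uncurry F))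
    (hF' : Continuous (Function.uncurry F')) (hFF' : ∀ x t, HasDerivAt (F · t) (F' x t) x)
    (a b x₀ : ℝ) :
    HasDerivAt (fun x => ∫ t in a..b, F x t) (∫ t in a..b, F' x₀ t) x₀ := by
  have hFx : ∀ x, Continuous (F x) := fun x => hF.comp (Continuous.prodMk_right x)
  obtain ⟨M, hM⟩ := (isCompact_closedBall x₀ 1 |>.prod isCompact_uIcc).exists_bound_of_continuousOn
    hF'.continuousOn
  refine (intervalIntegral.hasDerivAt_integral_of_dominated_loc_of_deriv_le (bound := fun _ => M)
    (ball_mem_nhds x₀ one_pos) (.of_forall fun x => (hFx x).aestronglyMeasurable)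
    ((hFx x₀).intervalIntegrable _ _)
    (hF'.comp (Continuous.prodMk_right x₀)).aestronglyMeasurable
    (.of_forall fun t ht x hx => hM (x, t) ⟨ball_subset_closedBall hx, Set.uIoc_subset_uIcc ht⟩)
    intervalIntegrable_const (.of_forall fun t _ x _ => hFF' x t)).2

theorem hasDerivAt_polar_radial {E : Type*} [NormedAddCommGroup E] [NormedSpace ℝ E]
    {ψ : ℝ × ℝ → E} {r θ : ℝ} (hψ : DifferentiableAt ℝ ψ (r * cos θ, r * sin θ)) :
    HasDerivAt (fun s => ψ (s * cos θ, s * sin θ))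
      (fderiv ℝ ψ (r * cos θ, r * sin θ) (cos θ, sin θ)) r := by
  have h : HasDerivAt (fun s : ℝ => (s * cos θ, s * sin θ)) (cos θ, sin θ) r := by
    simpa using ((hasDerivAt_id r).mul_const (cos θ)).prodMk ((hasDerivAt_id r).mul_const (sin θ))
  exact hψ.hasFDerivAt.comp_hasDerivAt r h

theorem hasDerivAt_polar_angular {E : Type*} [NormedAddCommGroup E] [NormedSpace ℝ E]
    {ψ : ℝ × ℝ → E} {r θ : ℝ} (hψ : DifferentiableAt ℝ ψ (r * cos θ, r * sin θ)) :
    HasDerivAt (fun t => ψ (r * cos t, r * sin t))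
      (fderiv ℝ ψ (r * cos θ, r * sin θ) (-(r * sin θ), r * cos θ)) θ := by
  have h : HasDerivAt (fun t : ℝ => (r * cos t, r * sin t)) (-(r * sin θ), r * cos θ) θ := by
    simpa using ((hasDerivAt_cos θ).const_mul r).prodMk ((hasDerivAt_sin θ).const_mul r)
  exact hψ.hasFDerivAt.comp_hasDerivAt θ h

theorem hasDerivAt_cexp_neg_I_mul (k : ℤ) (θ : ℝ) :
    HasDerivAt (fun t : ℝ => Complex.exp (-(Complex.I * k * t)))
      (-(Complex.I * k) * Complex.exp (-(Complex.I * k * θ))) θ := by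
  have h := (((hasDerivAt_id (θ : ℂ)).const_mul (-(Complex.I * k))).cexp).comp_ofReal
  simpa [mul_comm] using h

theorem integral_deriv_mul_cexp_eq_I_mul {u u' : ℝ → ℂ} (hu : u (2 * π) = u 0)
    (huu' : ∀ θ, HasDerivAt u (u' θ) θ) (hu' : Continuous u') (k : ℤ) :
    ∫ θ in (0 : ℝ)..2 * π, u' θ * Complex.exp (-(Complex.I * k * θ))
      = Complex.I * k * ∫ θ in (0 : ℝ)..2 * π, u θ * Complex.exp (-(Complex.I * k * θ)) := by
  have hexp_two_pi : Complex.exp (-(Complex.I * k * (2 * π : ℝ))) = 1 := by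
    rw [← Complex.exp_int_mul_two_pi_mul_I (-k)]
    push_cast
    ring_nf
  simp_rw [mul_comm (u' _)]
  rw [intervalIntegral.integral_mul_deriv_eq_deriv_mul (fun θ _ => hasDerivAt_cexp_neg_I_mul k θ)
    (fun θ _ => huu' θ) ((by fun_prop : Continuous _).intervalIntegrable _ _)
    (hu'.intervalIntegrable _ _), hexp_two_pi, hu, ← intervalIntegral.integral_const_mul]
  simp only [Complex.ofReal_zero, mul_zero, neg_zero, Complex.exp_zero, sub_self, zero_sub,
    ← intervalIntegral.integral_neg]
  congr 1 with θ
  ring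

theorem ContinuousLinearMap.apply_prod {E : Type*} [AddCommGroup E] [Module ℝ E]
    [TopologicalSpace E] (L : ℝ × ℝ →L[ℝ] E) (a b : ℝ) :
    L (a, b) = a • L (1, 0) + b • L (0, 1) := by
  rw [← L.map_smul, ← L.map_smul, ← L.map_add]
  simp

theorem cexp_neg_I_mul_of_mul_self_eq_one {s : ℤ} (hs : s * s = 1) (θ : ℝ) :
    Complex.exp (-(Complex.I * s * θ)) = cos θ - Complex.I * s * sin θ := by
  have h : ∀ t : ℝ, Complex.exp (t * Complex.I) = cos t + Complex.I * sin t := fun t => by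
    rw [Complex.exp_mul_I, ← Complex.ofReal_cos, ← Complex.ofReal_sin, mul_comm]
  rcases Int.eq_one_or_neg_one_of_mul_eq_one hs with rfl | rfl
  · rw [show -(Complex.I * ((1 : ℤ) : ℂ) * θ) = ((-θ : ℝ) : ℂ) * Complex.I by push_cast; ring, h,
      cos_neg, sin_neg]
    push_cast
    ring
  · rw [show -(Complex.I * ((-1 : ℤ) : ℂ) * θ) = (θ : ℂ) * Complex.I by push_cast; ring, h]
    push_cast
    ring

theorem cartesian_combination_mul_cexp_eq_polar (L : ℝ × ℝ →L[ℝ] ℂ) {s : ℤ} (hs : s * s = 1)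
    (k : ℤ) {r : ℝ} (hr : r ≠ 0) (θ : ℝ) :
    (L (1, 0) + s * Complex.I * L (0, 1)) * Complex.exp (-(Complex.I * (k + s : ℤ) * θ))
      = L (cos θ, sin θ) * Complex.exp (-(Complex.I * k * θ))
        + s * Complex.I / r *
            (L (-(r * sin θ), r * cos θ) * Complex.exp (-(Complex.I * k * θ))) := by
  have hexp : Complex.exp (-(Complex.I * (k + s : ℤ) * θ))
      = Complex.exp (-(Complex.I * k * θ)) * Complex.exp (-(Complex.I * s * θ)) := by
    rw [← Complex.exp_add]
    push_cast
    ring_nf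
  have hs' : (s : ℂ) * s = 1 := by exact_mod_cast hs
  have hrC : (r : ℂ) ≠ 0 := by exact_mod_cast hr
  rw [hexp, cexp_neg_I_mul_of_mul_self_eq_one hs, L.apply_prod (cos θ),
    L.apply_prod (-(r * sin θ))]
  simp only [Complex.real_smul]
  push_cast [-Complex.ofReal_cos, -Complex.ofReal_sin]
  field_simp
  linear_combination
    (-(s : ℂ) ^ 2 * L (0, 1) * sin θ) * Complex.I_mul_I + (L (0, 1) * sin θ) * hs'

section FourierProj

variable {ψ : ℝ × ℝ → ℂ}

theorem hasDerivAt_fourierProj (hψ : ContDiff ℝ 1 ψ) (k : ℤ) (r : ℝ) :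
    HasDerivAt (fourierProj k ψ) (((1 / (2 * π) : ℝ) : ℂ) *
      ∫ θ in (0 : ℝ)..2 * π,
        fderiv ℝ ψ (r * cos θ, r * sin θ) (cos θ, sin θ)
          * Complex.exp (-(Complex.I * k * θ))) r := by
  have hψ' := hψ.continuous_fderiv one_ne_zero
  have hψc := hψ.continuous
  refine (hasDerivAt_intervalIntegral_of_continuous_uncurry ?_ ?_
    (fun x θ => (hasDerivAt_polar_radial ((hψ.differentiable one_ne_zero) _)).mul_const _)
    0 (2 * π) r).const_mul _ <;>
  · simp only [Function.uncurry_def]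
    fun_prop

theorem integral_fderiv_angular_mul_cexp (hψ : ContDiff ℝ 1 ψ) (k : ℤ) (r : ℝ) :
    ∫ θ in (0 : ℝ)..2 * π,
        fderiv ℝ ψ (r * cos θ, r * sin θ) (-(r * sin θ), r * cos θ)
          * Complex.exp (-(Complex.I * k * θ))
      = Complex.I * k * ∫ θ in (0 : ℝ)..2 * π,
          ψ (r * cos θ, r * sin θ) * Complex.exp (-(Complex.I * k * θ)) := by
  have hψ' := hψ.continuous_fderiv one_ne_zero
  exact integral_deriv_mul_cexp_eq_I_mul (by simp)
    (fun θ => hasDerivAt_polar_angular ((hψ.differentiable one_ne_zero) _)) (by fun_prop) k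

theorem besselD_fourierProj (hψ : ContDiff ℝ 1 ψ) (k : ℤ) {s : ℤ} (hs : s * s = 1) {r : ℝ}
    (hr : r ≠ 0) :
    besselD (-(s * k : ℝ)) (fourierProj k ψ) r
      = fourierProj (k + s)
          (fun p => fderiv ℝ ψ p (1, 0) + s * Complex.I * fderiv ℝ ψ p (0, 1)) r := by
  have hψ' := hψ.continuous_fderiv one_ne_zero
  rw [besselD, (hasDerivAt_fourierProj hψ k r).deriv, fourierProj, fourierProj,
    intervalIntegral.integral_congr fun θ _ =>
      cartesian_combination_mul_cexp_eq_polar (fderiv ℝ ψ (r * cos θ, r * sin θ)) hs k hr θ,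
    intervalIntegral.integral_add ((by fun_prop : Continuous _).intervalIntegrable _ _)
      (((by fun_prop : Continuous _).intervalIntegrable _ _).const_mul _),
    intervalIntegral.integral_const_mul, integral_fderiv_angular_mul_cexp hψ k r]
  have hrC : (r : ℂ) ≠ 0 := by exact_mod_cast hr
  push_cast
  field_simp
  ring_nf
  simp only [Complex.I_sq]
  ring

end FourierProj

/-- `D_k P_k[ψ] = P_{k−1}[√2 ∂_ζ ψ]` and `D_{−k} P_k[ψ] = P_{k+1}[√2 ∂_{ζ̄} ψ]`,
where `√2 ∂_ζ ψ = ∂_x ψ − i ∂_y ψ` and `√2 ∂_{ζ̄} ψ = ∂_x ψ + i ∂_y ψ`. -/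
theorem fourierProj_besselD (k : ℤ) (ψ : ℝ × ℝ → ℂ) (hψ : ContDiff ℝ 1 ψ) :
    ∀ r > (0 : ℝ),
      besselD (k : ℝ) (fourierProj k ψ) r
          = fourierProj (k - 1)
              (fun p => fderiv ℝ ψ p (1, 0) - Complex.I * fderiv ℝ ψ p (0, 1)) r
      ∧ besselD (-(k : ℝ)) (fourierProj k ψ) r
          = fourierProj (k + 1)
              (fun p => fderiv ℝ ψ p (1, 0) + Complex.I * fderiv ℝ ψ p (0, 1)) r := by
  intro r hr
  constructor
  · convert besselD_fourierProj hψ k (s := -1) (by norm_num) hr.ne' using 3 <;>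
      simp [sub_eq_add_neg]
  · convert besselD_fourierProj hψ k (s := 1) (by norm_num) hr.ne' using 3 <;> simp
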